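/- The operators E and F on V = ℂ^{n+1} satisfy the (r,s)-Serre relation EF³ − (rs)^{−1}[3] FEF² + (rs)^{−1}[3] F²EF − F³E = 0, where [3] = r² + rs + s². (This is the relation (ad_r f₁)³(f₀) = 0 evaluated on the evaluation representation of U_{r,s}(ŝl₂).) -/

import Mathlib

/-- The two-parameter quantum integer `[m] = (r^m - s^m)/(r - s)`. -/
noncomputable def qint (r s : ℂ) (m : ℕ) : ℂ := (r ^ m - s ^ m) / (r - s)

/-- The operator `E` on `V = ℂ^{n+1}`, `E v_i = [n+1-i] v_{i-1}` (with `v_{-1} = 0`). -/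
noncomputable def Emat (n : ℕ) (r s : ℂ) : Matrix (Fin (n + 1)) (Fin (n + 1)) ℂ :=
  Matrix.of fun j i => if (j : ℕ) + 1 = (i : ℕ) then qint r s (n + 1 - (i : ℕ)) else 0

/-- The operator `F` on `V = ℂ^{n+1}`, `F v_i = [i+1] v_{i+1}` (with `v_{n+1} = 0`). -/
noncomputable def Fmat (n : ℕ) (r s : ℂ) : Matrix (Fin (n + 1)) (Fin (n + 1)) ℂ :=
  Matrix.of fun j i => if (j : ℕ) = (i : ℕ) + 1 then qint r s ((i : ℕ) + 1) else 0

/-!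
`E` lowers and `F` raises the index of `v_i` by one, so each of the four words of the relation
sends `v_i` to a multiple of `v_{i+2}`. With `m = i`, `a = n - 2 - i` and `c = (rs)⁻¹[3]`, the
combined coefficient is `[m+1][m+2]` times
`[m+3][a] - c [m+2][a+1] + c [m+1][a+2] - [m][a+3]`.
Since `(r - s)² [x][y] = r^(x+y) + s^(x+y) - r^x s^y - s^x r^y` and `x + y` is the same in all
four products, this reduces to `c · rs · (r - s) = r³ - s³`.
-/

open Matrix

lemma qint_zero (r s : ℂ) : qint r s 0 = 0 := by simp [qint]

lemma qint_serre_identity (r s : ℂ) (hr : r ≠ 0) (hs : s ≠ 0) (m a : ℕ) :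
    qint r s (m + 3) * qint r s a
      - (r * s)⁻¹ * (r ^ 2 + r * s + s ^ 2) * (qint r s (m + 2) * qint r s (a + 1))
      + (r * s)⁻¹ * (r ^ 2 + r * s + s ^ 2) * (qint r s (m + 1) * qint r s (a + 2))
      - qint r s m * qint r s (a + 3) = 0 := by
  have hrs : (r * s)⁻¹ * (r * s) = 1 := inv_mul_cancel₀ (mul_ne_zero hr hs)
  unfold qint
  linear_combination
    (r ^ m * s ^ a * (r - s) + s ^ m * r ^ a * (s - r)) * (r ^ 2 + r * s + s ^ 2) * (r - s)⁻¹ ^ 2 * hrs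

lemma sum_fin_ite_intCast_eq {M : Type*} [AddCommMonoid M] (n : ℕ) (f : ℕ → M) (i : ℤ) :
    ∑ k : Fin (n + 1), (if (k : ℤ) = i then f k else 0) = if 0 ≤ i ∧ i ≤ n then f i.toNat else 0 := by
  split_ifs with hi
  · rw [Finset.sum_eq_single ⟨i.toNat, by omega⟩
      (fun k _ hk => if_neg fun h => hk (Fin.ext (by simp; omega)))
      (fun h => absurd (Finset.mem_univ _) h)]
    simp [hi.1]
  · exact Finset.sum_eq_zero fun k _ => if_neg (by omega)

/-- Indexed by `ℤ`, so that `v_i = 0` for `i < 0` or `i > n`. -/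
def basisVec (n : ℕ) (i : ℤ) : Fin (n + 1) → ℂ := fun j => if (j : ℤ) = i then 1 else 0

lemma eq_zero_of_mulVec_basisVec {n : ℕ} (M : Matrix (Fin (n + 1)) (Fin (n + 1)) ℂ)
    (h : ∀ i : Fin (n + 1), M *ᵥ basisVec n i = 0) : M = 0 := by
  ext j i
  simpa [mulVec, dotProduct, basisVec, Fin.val_inj] using congrFun (h i) j

section

variable (n : ℕ) (r s : ℂ)

lemma Emat_mulVec_basisVec (i : ℤ) :
    Emat n r s *ᵥ basisVec n i = qint r s (n + 1 - i).toNat • basisVec n (i - 1) := by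
  ext j
  simp only [mulVec, dotProduct, Emat, basisVec, of_apply, mul_ite, mul_one, mul_zero,
    Pi.smul_apply, smul_eq_mul]
  rw [sum_fin_ite_intCast_eq n fun k => if (j : ℕ) + 1 = k then qint r s (n + 1 - k) else 0]
  split_ifs <;>
    first | rfl | omega | (congr 1; omega) | rw [show (n + 1 - i).toNat = 0 by omega, qint_zero]

lemma Fmat_mulVec_basisVec (i : ℤ) :
    Fmat n r s *ᵥ basisVec n i = qint r s (i + 1).toNat • basisVec n (i + 1) := by
  ext j
  simp only [mulVec, dotProduct, Fmat, basisVec, of_apply, mul_ite, mul_one, mul_zero,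
    Pi.smul_apply, smul_eq_mul]
  rw [sum_fin_ite_intCast_eq n fun k => if (j : ℕ) = k + 1 then qint r s (k + 1) else 0]
  split_ifs <;>
    first | rfl | omega | (congr 1; omega) | rw [show (i + 1).toNat = 0 by omega, qint_zero]

end

theorem serre_relation_F_general (n : ℕ) (r s : ℂ) (hr : r ≠ 0) (hs : s ≠ 0) :
    Emat n r s * Fmat n r s ^ 3
      - ((r * s)⁻¹ * (r ^ 2 + r * s + s ^ 2)) • (Fmat n r s * Emat n r s * Fmat n r s ^ 2)
      + ((r * s)⁻¹ * (r ^ 2 + r * s + s ^ 2)) • (Fmat n r s ^ 2 * Emat n r s * Fmat n r s)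
      - Fmat n r s ^ 3 * Emat n r s = 0 := by
  refine eq_zero_of_mulVec_basisVec _ fun i => ?_
  simp only [sub_mulVec, add_mulVec, smul_mulVec, pow_three, sq (Fmat n r s), ← mulVec_mulVec,
    Emat_mulVec_basisVec, Fmat_mulVec_basisVec, mulVec_smul, smul_smul, sub_add_cancel,
    add_sub_cancel_right, ← sub_smul, ← add_smul]
  by_cases h : (i : ℕ) + 2 ≤ n
  · refine smul_eq_zero_of_left ?_ _
    obtain ⟨a, ha⟩ := Nat.exists_eq_add_of_le h
    simp only [show ((i : ℕ) : ℤ).toNat = i by omega, show ((i : ℕ) + 1 : ℤ).toNat = i + 1 by omega,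
      show ((i : ℕ) + 1 + 1 : ℤ).toNat = i + 2 by omega,
      show ((i : ℕ) + 1 + 1 + 1 : ℤ).toNat = i + 3 by omega,
      show ((n : ℤ) + 1 - (i + 1 + 1 + 1)).toNat = a by omega,
      show ((n : ℤ) + 1 - (i + 1 + 1)).toNat = a + 1 by omega,
      show ((n : ℤ) + 1 - (i + 1)).toNat = a + 2 by omega,
      show ((n : ℤ) + 1 - i).toNat = a + 3 by omega]
    linear_combination qint r s (i + 1) * qint r s (i + 2) * qint_serre_identity r s hr hs i a
  · convert smul_zero _
    ext j
    simp only [basisVec, Pi.zero_apply, ite_eq_right_iff]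
    omega

/-- The `(r,s)`-Serre relation
`EF³ − (rs)⁻¹[3] FEF² + (rs)⁻¹[3] F²EF − F³E = 0`, where `[3] = r² + rs + s²`. -/
theorem serre_relation_F (n : ℕ) (r s : ℂ) (hr : r ≠ 0) (hs : s ≠ 0) (hrs : r ≠ s) :
    Emat n r s * Fmat n r s ^ 3
      - ((r * s)⁻¹ * (r ^ 2 + r * s + s ^ 2)) • (Fmat n r s * Emat n r s * Fmat n r s ^ 2)
      + ((r * s)⁻¹ * (r ^ 2 + r * s + s ^ 2)) • (Fmat n r s ^ 2 * Emat n r s * Fmat n r s)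
      - Fmat n r s ^ 3 * Emat n r s = 0 :=
  serre_relation_F_general n r s hr hs
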